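/- Let K be the fractal k-cube of order n with digit set D, and consider the sets F_α, G_α, G_{αβ} formed with K_1 = K_2 = K (so D_1 = D_2 = D). Then K has the finite intersection property — i.e., for every nonzero α ∈ A_k, the set F_α = K ∩ (K + α) is finite — if and only if every nonzero α ∈ A_k that is a maximal vertex of the structure graph (F_α ≠ ∅ and there is no β with β ≻ α) satisfies #G_α = 1, and every other nonzero α ∈ A_k with F_α ≠ ∅ satisfies G_α = ∅. -/

import Mathlib

open Set Pointwise MeasureTheory

noncomputable section

/-- Points of `ℝ^k`. -/
abbrev Pt (k : ℕ) := Fin k → ℝ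

/-- A vector with all coordinates in `{0, 1, …, n−1}`. -/
def IsDigit (n : ℕ) {k : ℕ} (d : Pt k) : Prop :=
  ∀ i, ∃ m : ℕ, m < n ∧ d i = (m : ℝ)

/-- A digit set: a nonempty subset of `{0, 1, …, n−1}^k`. -/
def IsDigitSet (n : ℕ) {k : ℕ} (D : Set (Pt k)) : Prop :=
  D.Nonempty ∧ ∀ d ∈ D, IsDigit n d

/-- `K` is the fractal `k`-cube of order `n` with digit set `D`:
a nonempty compact set with `nK = K + D`. -/
def IsFractalCube (n : ℕ) {k : ℕ} (D K : Set (Pt k)) : Prop :=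
  K.Nonempty ∧ IsCompact K ∧ (n : ℝ) • K = K + D

/-- `α ∈ A_k = {−1, 0, 1}^k`. -/
def IsAk {k : ℕ} (α : Pt k) : Prop :=
  ∀ i, α i = -1 ∨ α i = 0 ∨ α i = 1

/-- The unit cube `P = [0,1]^k`. -/
def unitCube (k : ℕ) : Set (Pt k) := {x | ∀ i, 0 ≤ x i ∧ x i ≤ 1}

/-- The face `P_α = P ∩ (P + α)`. -/
def face {k : ℕ} (α : Pt k) : Set (Pt k) :=
  unitCube k ∩ ((fun x => x + α) '' unitCube k)

/-- `α ⊑ β` : `β i = α i` whenever `α i ≠ 0`. -/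
def SqLe {k : ℕ} (α β : Pt k) : Prop := ∀ i, α i ≠ 0 → β i = α i

/-- `α ⊏ β`. -/
def SqLt {k : ℕ} (α β : Pt k) : Prop := SqLe α β ∧ α ≠ β

/-- `F_α = K₁ ∩ (K₂ + α)`. -/
def interF {k : ℕ} (K1 K2 : Set (Pt k)) (α : Pt k) : Set (Pt k) :=
  K1 ∩ ((fun x => x + α) '' K2)

/-- `G_{αβ} = D₁ ∩ (D₂ + nα − β)`. -/
def Gab (n : ℕ) {k : ℕ} (D1 D2 : Set (Pt k)) (α β : Pt k) : Set (Pt k) :=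
  D1 ∩ ((fun x => x + ((n : ℝ) • α - β)) '' D2)

/-- `G_α = G_{αα} = D₁ ∩ (D₂ + (n−1)α)`. -/
def Ga (n : ℕ) {k : ℕ} (D1 D2 : Set (Pt k)) (α : Pt k) : Set (Pt k) :=
  Gab n D1 D2 α α

/-- `β ≻ α` : there is a chain `α = α₀ ⊏ α₁ ⊏ … ⊏ α_p = β` in `A_k` (`p ≥ 1`)
with all `F_{α_j}` nonempty and all `G_{α_{j−1} α_j}` nonempty. -/
def GSucc (n : ℕ) {k : ℕ} (D1 D2 K1 K2 : Set (Pt k)) (β α : Pt k) : Prop :=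
  ∃ p : ℕ, 0 < p ∧ ∃ c : ℕ → Pt k, c 0 = α ∧ c p = β ∧
    (∀ j ≤ p, IsAk (c j)) ∧
    (∀ j < p, SqLt (c j) (c (j + 1))) ∧
    (∀ j ≤ p, (interF K1 K2 (c j)).Nonempty) ∧
    (∀ j < p, (Gab n D1 D2 (c j) (c (j + 1))).Nonempty)

/-- `β ≽ α`. -/
def GSuccEq (n : ℕ) {k : ℕ} (D1 D2 K1 K2 : Set (Pt k)) (β α : Pt k) : Prop :=
  GSucc n D1 D2 K1 K2 β α ∨ β = α

/-- The map `S_d(x) = (x + d)/n`. -/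
def Sdig (n : ℕ) {k : ℕ} (d : Pt k) : Pt k → Pt k :=
  fun x => (n : ℝ)⁻¹ • (x + d)

/-- The `p`-th refinement digit set
`D^(p) = { n^{p−1} d₁ + n^{p−2} d₂ + … + d_p : (d₁, …, d_p) ∈ D^p }`. -/
def refineD (n p : ℕ) {k : ℕ} (D : Set (Pt k)) : Set (Pt k) :=
  {x | ∃ f : Fin p → Pt k, (∀ j, f j ∈ D) ∧
    x = ∑ j : Fin p, ((n : ℝ) ^ (p - 1 - (j : ℕ))) • f j}

/-- A maximal vertex of the structure graph: `F_β ≠ ∅` and no `γ ≻ β`. -/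
def IsMaxVertex (n : ℕ) {k : ℕ} (D1 D2 K1 K2 : Set (Pt k)) (β : Pt k) : Prop :=
  IsAk β ∧ (interF K1 K2 β).Nonempty ∧ ¬∃ γ, IsAk γ ∧ GSucc n D1 D2 K1 K2 γ β

/-- The product `∏ #G_{α_j α_{j+1}}` over consecutive pairs of a chain. -/
def chainProd (n : ℕ) {k : ℕ} (D1 D2 : Set (Pt k)) : List (Pt k) → ℕ
  | [] => 1
  | [_] => 1
  | a :: b :: rest => (Gab n D1 D2 a b).ncard * chainProd n D1 D2 (b :: rest)

/-- A chain `α = α₁ ⊏ α₂ ⊏ … ⊏ α_p = β` inside `Γ_α` ending at a maximal vertex `β`. -/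
def IsMaxChainFrom (n : ℕ) {k : ℕ} (D1 D2 K1 K2 : Set (Pt k)) (α : Pt k)
    (c : List (Pt k)) : Prop :=
  c ≠ [] ∧ c.head? = some α ∧ List.Chain' SqLt c ∧
  (∀ β ∈ c, IsAk β ∧ GSuccEq n D1 D2 K1 K2 β α) ∧
  ∃ β, c.getLast? = some β ∧ IsMaxVertex n D1 D2 K1 K2 β

/-!
Write `S_d x = (x + d) / n`. Each `d ∈ G_{αβ}` maps `F_β` into `F_α`, and conversely
`n F_α ⊆ ⋃_{α ⊑ β} (F_β + G_{αβ})`, where integrality of the digits forces `β ∈ A_k`.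
A bounded set `F` with `n F ⊆ F + d` is at most a point, because `n^m (x - y)` stays bounded;
a finite `F` with `S_d F ⊆ F` is such a set, `S_d` being injective.

So if `F_α` is finite and nonempty, every `d ∈ G_α` fixes its only point `x`, whence `#G_α ≤ 1`.
At a maximal vertex the decomposition of `n x` provides some `d ∈ G_α`. Below a successor
`α ⊏ β` the point `x` is also `S_{d₀} z` with `z ∈ F_β`, whose coordinate at an `i` with
`α_i = 0 ≠ β_i` lies strictly between `0` and `1`, while `x_i = n x_i - d_i` is an integer.

Conversely, argue by induction along `⊏`: if `G_α = ∅`, then `F_α` is covered by the finitely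
many sets `S_d F_β` with `α ⊏ β`; if `G_α = {d}` at a maximal vertex, then `n F_α ⊆ F_α + d`.
-/

theorem eq_zero_of_forall_norm_pow_smul_le {𝕜 E : Type*} [NormedField 𝕜] [NormedAddCommGroup E]
    [NormedSpace 𝕜 E] {c : 𝕜} (hc : 1 < ‖c‖) {v : E} {C : ℝ} (h : ∀ m : ℕ, ‖c ^ m • v‖ ≤ C) :
    v = 0 := by
  by_contra hv
  have hpos : 0 < ‖v‖ := norm_pos_iff.mpr hv
  obtain ⟨m, hm⟩ := pow_unbounded_of_one_lt (C / ‖v‖) hc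
  have hCm := h m
  rw [norm_smul, norm_pow] at hCm
  rw [div_lt_iff₀ hpos] at hm
  linarith

theorem Bornology.IsBounded.subsingleton_of_forall_smul_eq_add {𝕜 E : Type*} [NormedField 𝕜]
    [NormedAddCommGroup E] [NormedSpace 𝕜 E] {F : Set E} (hF : Bornology.IsBounded F) {c : 𝕜}
    (hc : 1 < ‖c‖) {d : E} (h : ∀ x ∈ F, ∃ u ∈ F, c • x = u + d) : F.Subsingleton := by
  intro x hx y hy
  obtain ⟨C, hC⟩ := isBounded_iff_forall_norm_le.mp hF
  have hiter : ∀ m : ℕ, ∃ u ∈ F, ∃ v ∈ F, c ^ m • (x - y) = u - v := by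
    intro m
    induction m with
    | zero => exact ⟨x, hx, y, hy, by rw [pow_zero, one_smul]⟩
    | succ m ih =>
      obtain ⟨u, hu, v, hv, huv⟩ := ih
      obtain ⟨u', hu', hu'e⟩ := h u hu
      obtain ⟨v', hv', hv'e⟩ := h v hv
      refine ⟨u', hu', v', hv', ?_⟩
      rw [pow_succ', mul_smul, huv, smul_sub, hu'e, hv'e, add_sub_add_right_eq_sub]
  refine sub_eq_zero.mp (eq_zero_of_forall_norm_pow_smul_le hc (C := C + C) fun m => ?_)
  obtain ⟨u, hu, v, hv, huv⟩ := hiter m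
  rw [huv]
  exact (norm_sub_le u v).trans (add_le_add (hC u hu) (hC v hv))

section FractalCube

variable {k n : ℕ} {D K : Set (Pt k)}

theorem Sdig_eq_iff (hn : n ≠ 0) {d x y : Pt k} : Sdig n d y = x ↔ (n : ℝ) • x = y + d := by
  rw [Sdig, inv_smul_eq_iff₀ (by exact_mod_cast hn), eq_comm]

theorem Sdig_injective (hn : n ≠ 0) (d : Pt k) : Function.Injective (Sdig n d) := by
  intro x y hxy
  rw [Sdig_eq_iff hn, Sdig] at hxy
  rwa [smul_inv_smul₀ (by exact_mod_cast hn), add_left_inj, eq_comm] at hxy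

theorem Set.Finite.subsingleton_of_mapsTo_Sdig (hn : 1 < n) {F : Set (Pt k)}
    (hfin : F.Finite) (hF : Bornology.IsBounded F) {d : Pt k} (hmaps : MapsTo (Sdig n d) F F) :
    F.Subsingleton := by
  have hsurj : SurjOn (Sdig n d) F F :=
    ((hfin.injOn_iff_bijOn_of_mapsTo hmaps).mp (Sdig_injective (by omega) d).injOn).surjOn
  refine hF.subsingleton_of_forall_smul_eq_add (c := (n : ℝ)) (d := d) ?_ fun x hx => ?_
  · rw [Real.norm_natCast]; exact_mod_cast hn
  · obtain ⟨u, hu, hux⟩ := hsurj hx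
    exact ⟨u, hu, (Sdig_eq_iff (by omega)).mp hux⟩

theorem IsDigit.nonneg {d : Pt k} (hd : IsDigit n d) (i : Fin k) : 0 ≤ d i := by
  obtain ⟨m, -, hm⟩ := hd i
  rw [hm]; positivity

theorem IsDigit.le_sub_one {d : Pt k} (hd : IsDigit n d) (i : Fin k) : d i ≤ n - 1 := by
  obtain ⟨m, hmn, hm⟩ := hd i
  have : (m : ℝ) + 1 ≤ n := by exact_mod_cast hmn
  linarith

theorem finite_of_forall_isDigit (hD : ∀ d ∈ D, IsDigit n d) : D.Finite := by
  refine (Set.Finite.pi fun _ => (Set.finite_Iio n).image ((↑) : ℕ → ℝ)).subset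
    fun d hd i _ => ?_
  obtain ⟨m, hmn, hm⟩ := hD d hd i
  exact ⟨m, hmn, hm.symm⟩

theorem finite_setOf_isAk : {α : Pt k | IsAk α}.Finite := by
  refine (Set.Finite.pi fun _ => Set.toFinite ({-1, 0, 1} : Set ℝ)).subset fun α hα i _ => ?_
  simpa using hα i

theorem unitCube_eq_Icc : unitCube k = Icc 0 1 := by
  ext x
  simp [unitCube, Pi.le_def, forall_and]

theorem isBounded_unitCube : Bornology.IsBounded (unitCube k) :=
  unitCube_eq_Icc ▸ Metric.isBounded_Icc 0 1

theorem isBounded_interF {K2 : Set (Pt k)} (hsub : K ⊆ unitCube k) (α : Pt k) :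
    Bornology.IsBounded (interF K K2 α) :=
  isBounded_unitCube.subset (inter_subset_left.trans hsub)

theorem IsFractalCube.subset_unitCube (hn : 1 < n) (hD : ∀ d ∈ D, IsDigit n d)
    (hK : IsFractalCube n D K) : K ⊆ unitCube k := by
  obtain ⟨hne, hcpt, hEq⟩ := hK
  have hn' : (1 : ℝ) < n := by exact_mod_cast hn
  have hdecomp : ∀ x ∈ K, ∃ y ∈ K, ∃ d ∈ D, ∀ i, y i + d i = n * x i := by
    intro x hx
    obtain ⟨y, hy, d, hd, hyd⟩ := Set.mem_add.mp (hEq ▸ smul_mem_smul_set hx)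
    exact ⟨y, hy, d, hd, fun i => by simpa using congrFun hyd i⟩
  intro x hx i
  constructor
  · obtain ⟨x₀, hx₀, hmin⟩ := hcpt.exists_isMinOn hne (continuous_apply i).continuousOn
    obtain ⟨y, hy, d, hd, hyd⟩ := hdecomp x₀ hx₀
    have hy₀ : x₀ i ≤ y i := hmin hy
    have hx₀ : x₀ i ≤ x i := hmin hx
    nlinarith [(hD d hd).nonneg i, hyd i]
  · obtain ⟨x₀, hx₀, hmax⟩ := hcpt.exists_isMaxOn hne (continuous_apply i).continuousOn
    obtain ⟨y, hy, d, hd, hyd⟩ := hdecomp x₀ hx₀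
    have hy₀ : y i ≤ x₀ i := hmax hy
    have hx₀ : x i ≤ x₀ i := hmax hx
    nlinarith [(hD d hd).le_sub_one i, hyd i]

theorem Sdig_mem (hn : n ≠ 0) (hEq : (n : ℝ) • K = K + D) {d z : Pt k} (hz : z ∈ K)
    (hd : d ∈ D) : Sdig n d z ∈ K := by
  have hzd : z + d ∈ (n : ℝ) • K := hEq ▸ Set.add_mem_add hz hd
  obtain ⟨u, hu, hnu⟩ := Set.mem_smul_set.mp hzd
  rwa [(Sdig_eq_iff hn).mpr hnu]

theorem Sdig_mem_interF (hn : n ≠ 0) (hEq : (n : ℝ) • K = K + D) {α β d z : Pt k}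
    (hd : d ∈ Gab n D D α β) (hz : z ∈ interF K K β) : Sdig n d z ∈ interF K K α := by
  obtain ⟨hdD, e, heD, rfl⟩ := hd
  obtain ⟨hzK, w, hwK, rfl⟩ := hz
  refine ⟨Sdig_mem hn hEq hzK hdD, Sdig n e w, Sdig_mem hn hEq hwK heD, ?_⟩
  rw [eq_comm, Sdig_eq_iff hn, Sdig, smul_add, smul_inv_smul₀ (by exact_mod_cast hn)]
  beta_reduce
  abel

theorem isAk_coord_of_digit_add_mul_sub_digit {s t a b : ℝ} (ha : ∃ m : ℕ, m < n ∧ a = m)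
    (hb : ∃ m : ℕ, m < n ∧ b = m)
    (ht : t = -1 ∨ t = 0 ∨ t = 1) (hs : s = b + n * t - a) (hs1 : -1 ≤ s) (hs2 : s ≤ 1) :
    (s = -1 ∨ s = 0 ∨ s = 1) ∧ (t ≠ 0 → s = t) := by
  obtain ⟨ma, hma, rfl⟩ := ha
  obtain ⟨mb, hmb, rfl⟩ := hb
  obtain ⟨j, hj1, hj2, rfl⟩ : ∃ j : ℤ, -1 ≤ j ∧ j ≤ 1 ∧ t = j := by
    rcases ht with rfl | rfl | rfl
    exacts [⟨-1, by norm_num⟩, ⟨0, by norm_num⟩, ⟨1, by norm_num⟩]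
  subst hs
  have h1 : (-1 : ℤ) ≤ mb + n * j - ma := by exact_mod_cast hs1
  have h2 : (mb : ℤ) + n * j - ma ≤ 1 := by exact_mod_cast hs2
  have key : ((mb : ℤ) + n * j - ma = -1 ∨ (mb : ℤ) + n * j - ma = 0 ∨
      (mb : ℤ) + n * j - ma = 1) ∧ (j ≠ 0 → (mb : ℤ) + n * j - ma = j) := by
    interval_cases j <;> omega
  exact_mod_cast key

theorem exists_smul_eq_add_of_mem_interF (hD : ∀ d ∈ D, IsDigit n d)
    (hEq : (n : ℝ) • K = K + D) (hsub : K ⊆ unitCube k) {α x : Pt k} (hα : IsAk α)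
    (hx : x ∈ interF K K α) :
    ∃ β, IsAk β ∧ SqLe α β ∧ ∃ y ∈ interF K K β, ∃ d ∈ Gab n D D α β, (n : ℝ) • x = y + d := by
  obtain ⟨hxK, w, hwK, rfl⟩ := hx
  obtain ⟨y, hy, d, hd, hyd⟩ := Set.mem_add.mp (hEq ▸ smul_mem_smul_set hxK)
  obtain ⟨y', hy', d', hd', hyd'⟩ := Set.mem_add.mp (hEq ▸ smul_mem_smul_set hwK)
  have hβ : y - y' = d' + (n : ℝ) • α - d := by
    rw [smul_add, ← hyd'] at hyd
    linear_combination (norm := module) hyd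
  have hcoord : ∀ i, ((y - y') i = -1 ∨ (y - y') i = 0 ∨ (y - y') i = 1) ∧
      (α i ≠ 0 → (y - y') i = α i) := fun i =>
    isAk_coord_of_digit_add_mul_sub_digit (hD d hd i) (hD d' hd' i) (hα i)
      (by simpa using congrFun hβ i)
      (by simp only [Pi.sub_apply]; linarith [(hsub hy i).1, (hsub hy' i).2])
      (by simp only [Pi.sub_apply]; linarith [(hsub hy i).2, (hsub hy' i).1])
  refine ⟨y - y', fun i => (hcoord i).1, fun i => (hcoord i).2,
    y, ⟨hy, y', hy', add_sub_cancel y' y⟩,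
    d, ⟨hd, d', hd', by beta_reduce; rw [hβ]; abel⟩, hyd.symm⟩

section StructureGraph

variable {D1 D2 K1 K2 : Set (Pt k)}

theorem gSucc_of_sqLt {α β : Pt k} (hα : IsAk α) (hβ : IsAk β) (hαβ : SqLt α β)
    (hFα : (interF K1 K2 α).Nonempty) (hFβ : (interF K1 K2 β).Nonempty)
    (hG : (Gab n D1 D2 α β).Nonempty) : GSucc n D1 D2 K1 K2 β α := by
  refine ⟨1, one_pos, fun j => if j = 0 then α else β, rfl, rfl, ?_, ?_, ?_, ?_⟩
  · intro j _
    dsimp only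
    split_ifs
    exacts [hα, hβ]
  · intro j hj
    obtain rfl : j = 0 := by omega
    exact hαβ
  · intro j _
    dsimp only
    split_ifs
    exacts [hFα, hFβ]
  · intro j hj
    obtain rfl : j = 0 := by omega
    exact hG

theorem GSucc.exists_sqLt {α γ : Pt k} (h : GSucc n D1 D2 K1 K2 γ α) :
    ∃ β, IsAk β ∧ SqLt α β ∧ (interF K1 K2 β).Nonempty ∧ (Gab n D1 D2 α β).Nonempty := by
  obtain ⟨p, hp, c, rfl, -, hAk, hlt, hF, hG⟩ := h
  exact ⟨c 1, hAk 1 hp, hlt 0 hp, hF 1 hp, hG 0 hp⟩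

end StructureGraph

theorem SqLe.ne_zero {α β : Pt k} (h : SqLe α β) (hα : α ≠ 0) : β ≠ 0 := by
  obtain ⟨i, hi⟩ := Function.ne_iff.mp hα
  rintro rfl
  exact hi (h i hi).symm

theorem SqLt.exists_eq_zero_ne_zero {α β : Pt k} (h : SqLt α β) : ∃ i, α i = 0 ∧ β i ≠ 0 := by
  obtain ⟨i, hi⟩ := Function.ne_iff.mp h.2
  have hαi : α i = 0 := by_contra fun hαi => hi (h.1 i hαi).symm
  exact ⟨i, hαi, fun hβi => hi (hαi.trans hβi.symm)⟩

theorem SqLt.ncard_zeros_lt {α β : Pt k} (h : SqLt α β) :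
    {i | β i = 0}.ncard < {i | α i = 0}.ncard := by
  refine Set.ncard_lt_ncard ⟨fun i (hβi : β i = 0) => by_contra fun hαi =>
    hαi ((h.1 i hαi).symm.trans hβi), fun hsub => ?_⟩
  obtain ⟨i, hαi, hβi⟩ := h.exists_eq_zero_ne_zero
  exact hβi (hsub hαi)

theorem exists_nat_coord_of_mem_Gab (hD : ∀ d ∈ D, IsDigit n d) (hsub : K ⊆ unitCube k)
    {α β d z : Pt k} (hβ : IsAk β) {i : Fin k} (hαi : α i = 0) (hβi : β i ≠ 0)
    (hd : d ∈ Gab n D D α β) (hz : z ∈ interF K K β) :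
    ∃ m : ℕ, 0 < m ∧ m < n ∧ z i + d i = m := by
  obtain ⟨hdD, e, heD, hed⟩ := hd
  obtain ⟨hzK, w, hwK, hwz⟩ := hz
  have hdi : e i - β i = d i := by simpa [hαi, sub_eq_add_neg] using congrFun hed i
  have hzi : w i + β i = z i := by simpa using congrFun hwz i
  have hz01 := hsub hzK i
  have hw01 := hsub hwK i
  obtain ⟨md, hmd, hmdi⟩ := hD d hdD i
  obtain ⟨me, hme, hmei⟩ := hD e heD i
  rcases hβ i with h | h | h
  · refine ⟨md, ?_, hmd, by linarith⟩
    have : (0 : ℝ) < md := by linarith [(hD e heD).nonneg i]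
    exact_mod_cast this
  · exact absurd h hβi
  · refine ⟨me, ?_, hme, by linarith⟩
    have : (0 : ℝ) < me := by linarith [(hD d hdD).nonneg i]
    exact_mod_cast this

theorem smul_eq_add_of_mem_Ga (hn : 1 < n) (hEq : (n : ℝ) • K = K + D) (hsub : K ⊆ unitCube k)
    {α x d : Pt k} (hfin : (interF K K α).Finite) (hx : x ∈ interF K K α)
    (hd : d ∈ Ga n D D α) : (n : ℝ) • x = x + d := by
  have hmaps : MapsTo (Sdig n d) (interF K K α) (interF K K α) :=
    fun z hz => Sdig_mem_interF (by omega) hEq hd hz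
  have hsingle := hfin.subsingleton_of_mapsTo_Sdig hn (isBounded_interF hsub α) hmaps
  exact (Sdig_eq_iff (by omega)).mp (hsingle (hmaps hx) hx)

theorem exists_smul_eq_add_of_not_gSucc (hD : ∀ d ∈ D, IsDigit n d)
    (hEq : (n : ℝ) • K = K + D) (hsub : K ⊆ unitCube k) {α x : Pt k} (hα : IsAk α)
    (hmax : ¬∃ β, IsAk β ∧ GSucc n D D K K β α) (hx : x ∈ interF K K α) :
    ∃ y ∈ interF K K α, ∃ d ∈ Ga n D D α, (n : ℝ) • x = y + d := by
  obtain ⟨β, hβ, hαβ, y, hy, d, hd, hxyd⟩ :=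
    exists_smul_eq_add_of_mem_interF hD hEq hsub hα hx
  obtain rfl : α = β := by
    by_contra hne
    exact hmax ⟨β, hβ, gSucc_of_sqLt hα hβ ⟨hαβ, hne⟩ ⟨x, hx⟩ ⟨y, hy⟩ ⟨d, hd⟩⟩
  exact ⟨y, hy, d, hd, hxyd⟩

theorem ncard_Ga_eq_one_of_finite (hn : 1 < n) (hD : ∀ d ∈ D, IsDigit n d)
    (hEq : (n : ℝ) • K = K + D) (hsub : K ⊆ unitCube k) {α : Pt k} (hα : IsAk α)
    (hfin : (interF K K α).Finite) (hF : (interF K K α).Nonempty) (hmax : ¬∃ β, IsAk β ∧ GSucc n D D K K β α) :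
    (Ga n D D α).ncard = 1 := by
  obtain ⟨x, hx⟩ := hF
  obtain ⟨-, -, d, hd, -⟩ := exists_smul_eq_add_of_not_gSucc hD hEq hsub hα hmax hx
  refine Set.ncard_eq_one.mpr ⟨d, Set.eq_singleton_iff_unique_mem.mpr ⟨hd, fun d' hd' => ?_⟩⟩
  exact add_left_cancel <| (smul_eq_add_of_mem_Ga hn hEq hsub hfin hx hd').symm.trans
    (smul_eq_add_of_mem_Ga hn hEq hsub hfin hx hd)

theorem Ga_eq_empty_of_finite (hn : 1 < n) (hD : ∀ d ∈ D, IsDigit n d)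
    (hEq : (n : ℝ) • K = K + D) (hsub : K ⊆ unitCube k) {α : Pt k} (hfin : (interF K K α).Finite)
    (hsucc : ∃ β, IsAk β ∧ GSucc n D D K K β α) : Ga n D D α = ∅ := by
  refine Set.eq_empty_of_forall_notMem fun d hd => ?_
  obtain ⟨γ, -, hγ⟩ := hsucc
  obtain ⟨β, hβ, hαβ, ⟨z, hz⟩, ⟨d₀, hd₀⟩⟩ := hγ.exists_sqLt
  obtain ⟨i, hαi, hβi⟩ := hαβ.exists_eq_zero_ne_zero
  obtain ⟨m, hm0, hmn, hm⟩ := exists_nat_coord_of_mem_Gab hD hsub hβ hαi hβi hd₀ hz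
  set x := Sdig n d₀ z with hx_def
  have hx : x ∈ interF K K α := Sdig_mem_interF (by omega) hEq hd₀ hz
  have h1 : (n : ℝ) * x i = m := by
    rw [← hm]; simpa using congrFun ((Sdig_eq_iff (by omega)).mp hx_def.symm) i
  have h2 : (n : ℝ) * x i = x i + d i := by
    simpa using congrFun (smul_eq_add_of_mem_Ga hn hEq hsub hfin hx hd) i
  obtain ⟨a, -, ha⟩ := hD d hd.1 i
  -- `x i = m - a` is an integer, yet `n * x i = m` lies strictly between `0` and `n`.
  have hint : (n : ℤ) * (m - a) = m := by
    have : x i = m - a := by linarith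
    rw [this] at h1
    exact_mod_cast h1
  rcases le_or_gt (m : ℤ) a with h | h <;> nlinarith

theorem finite_interF_of_Ga (hn : 1 < n) (hD : ∀ d ∈ D, IsDigit n d)
    (hEq : (n : ℝ) • K = K + D) (hsub : K ⊆ unitCube k)
    (hG : ∀ α : Pt k, IsAk α → α ≠ 0 → (interF K K α).Nonempty →
      ((¬∃ β, IsAk β ∧ GSucc n D D K K β α) → (Ga n D D α).ncard = 1) ∧
      ((∃ β, IsAk β ∧ GSucc n D D K K β α) → Ga n D D α = ∅))
    (α : Pt k) (hα : IsAk α) (hα0 : α ≠ 0) : (interF K K α).Finite := by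
  rcases (interF K K α).eq_empty_or_nonempty with hF | hF
  · exact hF ▸ Set.finite_empty
  by_cases hsucc : ∃ β, IsAk β ∧ GSucc n D D K K β α
  · have hGα : Ga n D D α = ∅ := (hG α hα hα0 hF).2 hsucc
    have hcover : interF K K α ⊆ ⋃ β ∈ {β | IsAk β ∧ SqLt α β}, ⋃ d ∈ D,
        Sdig n d '' interF K K β := by
      intro x hx
      obtain ⟨β, hβ, hαβ, y, hy, d, hd, hxyd⟩ :=
        exists_smul_eq_add_of_mem_interF hD hEq hsub hα hx
      have hne : α ≠ β := by
        rintro rfl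
        exact (hGα ▸ hd : d ∈ (∅ : Set (Pt k)))
      simp only [mem_iUnion, mem_image]
      exact ⟨β, ⟨hβ, hαβ, hne⟩, d, hd.1, y, hy, (Sdig_eq_iff (by omega)).mpr hxyd⟩
    refine Set.Finite.subset ?_ hcover
    refine (finite_setOf_isAk.subset fun β hβ => hβ.1).biUnion fun β hβ =>
      (finite_of_forall_isDigit hD).biUnion fun d _ => Set.Finite.image _ ?_
    exact finite_interF_of_Ga hn hD hEq hsub hG β hβ.1 (hβ.2.1.ne_zero hα0)
  · obtain ⟨d₀, hd₀⟩ := Set.ncard_eq_one.mp ((hG α hα hα0 hF).1 hsucc)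
    have hcontract : ∀ x ∈ interF K K α, ∃ y ∈ interF K K α, (n : ℝ) • x = y + d₀ := by
      intro x hx
      obtain ⟨y, hy, d, hd, hxyd⟩ := exists_smul_eq_add_of_not_gSucc hD hEq hsub hα hsucc hx
      obtain rfl : d = d₀ := by rwa [hd₀] at hd
      exact ⟨y, hy, hxyd⟩
    have hn' : 1 < ‖(n : ℝ)‖ := by rw [Real.norm_natCast]; exact_mod_cast hn
    exact ((isBounded_interF hsub α).subsingleton_of_forall_smul_eq_add hn' hcontract).finite
termination_by {i | α i = 0}.ncard
decreasing_by exact hβ.2.ncard_zeros_lt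

end FractalCube

theorem finite_intersection_iff_general {k n : ℕ} (hn : 2 ≤ n)
    (D K : Set (Pt k)) (hD : IsDigitSet n D) (hK : IsFractalCube n D K) :
    (∀ α : Pt k, IsAk α → α ≠ 0 → (interF K K α).Finite) ↔
    (∀ α : Pt k, IsAk α → α ≠ 0 → (interF K K α).Nonempty →
      ((¬∃ β, IsAk β ∧ GSucc n D D K K β α) → (Ga n D D α).ncard = 1) ∧
      ((∃ β, IsAk β ∧ GSucc n D D K K β α) → Ga n D D α = ∅)) := by
  have hsub : K ⊆ unitCube k := hK.subset_unitCube hn hD.2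
  constructor
  · intro hfin α hα hα0 hF
    exact ⟨ncard_Ga_eq_one_of_finite hn hD.2 hK.2.2 hsub hα (hfin α hα hα0) hF,
      Ga_eq_empty_of_finite hn hD.2 hK.2.2 hsub (hfin α hα hα0)⟩
  · exact finite_interF_of_Ga hn hD.2 hK.2.2 hsub

/-- a fractal cube `K` has the finite intersection property iff every
nonzero maximal vertex `α` of the structure graph has `#G_α = 1`, and every other
nonzero vertex `α` (with `F_α ≠ ∅`) has `G_α = ∅`. -/
theorem finite_intersection_iff {k n : ℕ} (hk : 1 ≤ k) (hn : 2 ≤ n)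
    (D K : Set (Pt k)) (hD : IsDigitSet n D) (hK : IsFractalCube n D K) :
    (∀ α : Pt k, IsAk α → α ≠ 0 → (interF K K α).Finite) ↔
    (∀ α : Pt k, IsAk α → α ≠ 0 → (interF K K α).Nonempty →
      ((¬∃ β, IsAk β ∧ GSucc n D D K K β α) → (Ga n D D α).ncard = 1) ∧
      ((∃ β, IsAk β ∧ GSucc n D D K K β α) → Ga n D D α = ∅)) :=
  finite_intersection_iff_general hn D K hD hK
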